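/- arXiv:math/0603349 — 4 statements merged into one kernel-verified Lean document; each statement's English description precedes it below -/
import Mathlib

section
/- Let X₁,...,X_N be i.i.d. real random variables with |X_i| ≤ M a.s., and let 0 < β < N/M. Then E[exp(∑_{i=1}^N log(1 − (β/N)X_i))] = (1 − (β/N)E[X])^N, and consequently for any δ > 0, with probability at least 1 − δ: E[X] ≤ (N/β)·(1 − exp((1/N)∑_{i=1}^N log(1 − (β/N)X_i) − (log(1/δ))/N)). -/
open MeasureTheory Real

/-!
Since `exp ∘ log` is the identity on positive reals and `|X| ≤ M` with `β M < N` keeps every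
factor `1 - (β/N) X_i` positive, the integrand is `∏ i (1 - (β/N) X_i)`, whose expectation
factorises over the independent coordinates into `(1 - (β/N) E[X])^N`. Markov's inequality at
level `(1 - (β/N) E[X])^N / δ` then bounds the probability that `∑ log (1 - (β/N) X_i)` is
large by `δ`, and on the complementary event solving for `E[X]` gives the stated bound.
-/

theorem one_sub_ofReal_integral_div_le_measure_le {Ω : Type*} [MeasurableSpace Ω]
    {μ : Measure Ω} [IsProbabilityMeasure μ] {Y : Ω → ℝ} (hY_nonneg : 0 ≤ᵐ[μ] Y)
    (hY : Integrable Y μ) {t : ℝ} (ht : 0 < t) :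
    1 - ENNReal.ofReal ((∫ ω, Y ω ∂μ) / t) ≤ μ {ω | Y ω ≤ t} := by
  set A := {ω | Y ω ≤ t}
  have hmarkov : μ {ω | t ≤ Y ω} ≤ ENNReal.ofReal ((∫ ω, Y ω ∂μ) / t) := by
    rw [ENNReal.le_ofReal_iff_toReal_le (measure_ne_top μ _)
      (div_nonneg (integral_nonneg_of_ae hY_nonneg) ht.le), le_div_iff₀' ht]
    exact mul_meas_ge_le_integral_of_nonneg hY_nonneg hY t
  have hcompl : Aᶜ ⊆ {ω | t ≤ Y ω} := fun ω (hω : ¬Y ω ≤ t) => le_of_not_ge hω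
  rw [tsub_le_iff_right]
  calc (1 : ENNReal) = μ (A ∪ Aᶜ) := by rw [Set.union_compl_self, measure_univ]
    _ ≤ μ A + μ Aᶜ := measure_union_le A Aᶜ
    _ ≤ μ A + ENNReal.ofReal ((∫ ω, Y ω ∂μ) / t) := by
      gcongr
      exact (measure_mono hcompl).trans hmarkov

section PiExpSumLog

variable {ι E : Type*} [Fintype ι] [MeasurableSpace E] {P : Measure E} {f : E → ℝ}

theorem exp_log_ae_eq_of_ae_pos (hf_pos : ∀ᵐ x ∂P, 0 < f x) :
    (fun x => exp (log (f x))) =ᵐ[P] f :=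
  hf_pos.mono fun _ hx => exp_log hx

theorem integral_pi_exp_sum_log [SigmaFinite P] (hf_pos : ∀ᵐ x ∂P, 0 < f x) :
    ∫ ω : ι → E, exp (∑ i, log (f (ω i))) ∂(Measure.pi fun _ => P)
      = (∫ x, f x ∂P) ^ Fintype.card ι := by
  simp_rw [exp_sum]
  rw [integral_fintype_prod_eq_pow fun x => exp (log (f x)),
    integral_congr_ae (exp_log_ae_eq_of_ae_pos hf_pos)]

theorem integrable_pi_exp_sum_log [SigmaFinite P] (hf_pos : ∀ᵐ x ∂P, 0 < f x)
    (hf : Integrable f P) :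
    Integrable (fun ω : ι → E => exp (∑ i, log (f (ω i)))) (Measure.pi fun _ => P) := by
  simp_rw [exp_sum]
  exact Integrable.fintype_prod fun _ => hf.congr (exp_log_ae_eq_of_ae_pos hf_pos).symm

end PiExpSumLog

theorem exp_mul_sub_log_div_le_iff {S δ m : ℝ} {N : ℕ} (hN : 0 < N) (hδ : 0 < δ)
    (hm : 0 < m) :
    exp (1 / N * S - log (1 / δ) / N) ≤ m ↔ exp S ≤ m ^ N / δ := by
  have hpow : exp (1 / N * S - log (1 / δ) / N) ^ N = exp S * δ := by
    rw [← exp_nat_mul, show (N : ℝ) * (1 / N * S - log (1 / δ) / N) = S - log (1 / δ) by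
      field_simp, exp_sub, exp_log (by positivity)]
    field_simp
  rw [← pow_le_pow_iff_left₀ (exp_pos _).le hm.le hN.ne', hpow, le_div_iff₀ hδ]

theorem le_div_mul_one_sub_exp_iff {a β S δ : ℝ} {N : ℕ} (hβ : 0 < β) (hN : 0 < N)
    (hδ : 0 < δ) (hm : 0 < 1 - β / N * a) :
    a ≤ N / β * (1 - exp (1 / N * S - log (1 / δ) / N)) ↔
      exp S ≤ (1 - β / N * a) ^ N / δ := by
  have hβN : 0 < β / N := div_pos hβ (Nat.cast_pos.mpr hN)
  rw [← inv_div, le_inv_mul_iff₀ hβN, le_sub_comm, exp_mul_sub_log_div_le_iff hN hδ hm]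

/-- Product formula `E[exp(∑ log(1 - (β/N)X_i))] = (1 - (β/N)E[X])^N` for i.i.d. bounded
variables, and the resulting high-probability upper confidence bound on `E[X]`. -/
theorem chernoff_product_formula_and_upper_bound
    (P : Measure ℝ) [IsProbabilityMeasure P]
    (M : ℝ) (hM : 0 < M) (hbound : ∀ᵐ x ∂P, |x| ≤ M)
    (hint : Integrable (fun x : ℝ => x) P)
    (N : ℕ) (hN : 0 < N) (β : ℝ) (hβ0 : 0 < β) (hβ : β < N / M) :
    (∫ ω : Fin N → ℝ,
        Real.exp (∑ i, Real.log (1 - (β / N) * ω i))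
        ∂(Measure.pi fun _ : Fin N => P))
      = (1 - (β / N) * ∫ x, x ∂P) ^ N ∧
    ∀ δ : ℝ, 0 < δ →
      (Measure.pi fun _ : Fin N => P)
        {ω : Fin N → ℝ |
          (∫ x, x ∂P) ≤ ((N : ℝ) / β) *
            (1 - Real.exp ((1 / (N : ℝ)) * ∑ i, Real.log (1 - (β / N) * ω i)
                - Real.log (1 / δ) / N))}
        ≥ 1 - ENNReal.ofReal δ := by
  have hβM : β / N * M < 1 := by
    rw [div_mul_eq_mul_div, div_lt_one (Nat.cast_pos.mpr hN)]
    exact (lt_div_iff₀ hM).mp hβ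
  have hpos_of_le : ∀ x ≤ M, 0 < 1 - β / N * x := fun x hx => by
    linarith [mul_le_mul_of_nonneg_left hx (div_pos hβ0 (Nat.cast_pos.mpr hN)).le]
  have hpos : ∀ᵐ x ∂P, 0 < 1 - β / N * x :=
    hbound.mono fun x hx => hpos_of_le x (le_of_abs_le hx)
  have hm : 0 < 1 - β / N * ∫ x, x ∂P := hpos_of_le _ <| by
    simpa using integral_mono_ae hint (integrable_const M) (hbound.mono fun _ => le_of_abs_le)
  have hmean : ∫ x, 1 - β / N * x ∂P = 1 - β / N * ∫ x, x ∂P := by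
    rw [integral_sub (integrable_const 1) (hint.const_mul _), integral_const_mul]; simp
  have hprod := integral_pi_exp_sum_log (ι := Fin N) hpos
  rw [hmean, Fintype.card_fin] at hprod
  refine ⟨hprod, fun δ hδ => ?_⟩
  have hmarkov := one_sub_ofReal_integral_div_le_measure_le (ae_of_all _ fun _ => (exp_pos _).le)
    (integrable_pi_exp_sum_log (ι := Fin N) hpos ((integrable_const 1).sub (hint.const_mul _)))
    (div_pos (pow_pos hm N) hδ)
  rw [hprod, div_div_cancel₀ (pow_pos hm N).ne'] at hmarkov
  simp_rw [le_div_mul_one_sub_exp_iff hβ0 hN hδ hm]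
  exact hmarkov
end

section
/- Let a₁,...,a_m be real numbers and β_k ≥ 0, and let {f_k}_{k=1}^m be an orthonormal family in a Hilbert space (‖f_k‖² = 1 and ⟨f_j, f_k⟩ = 0 for j ≠ k). Consider the convex sets C_k = {g : ‖Π_{span f_k}(a_k f_k − g)‖² ≤ β_k}. Then the successive projections satisfy Π_{C_m}···Π_{C_1} 0 = ∑_{k=1}^m sign(a_k)(|a_k| − √β_k)₊ f_k, the soft-thresholding of the coefficient vector. -/
/-- `p` is the metric projection of `x` onto `S`. -/
def IsMetricProjOn {H : Type*} [NormedAddCommGroup H] (S : Set H) (x p : H) : Prop :=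
  p ∈ S ∧ ∀ y ∈ S, ‖p - x‖ ≤ ‖y - x‖

lemma sq_le_iff_abs_le_sqrt {x β : ℝ} (hβ : 0 ≤ β) :
    x ^ 2 ≤ β ↔ |x| ≤ Real.sqrt β := by
  rw [← Real.sqrt_sq_eq_abs]
  constructor
  · exact fun h => Real.sqrt_le_sqrt h
  · intro h
    calc x ^ 2 = Real.sqrt (x ^ 2) ^ 2 := (Real.sq_sqrt (sq_nonneg x)).symm
      _ ≤ Real.sqrt β ^ 2 := by
          exact pow_le_pow_left₀ (Real.sqrt_nonneg _) h 2
      _ = β := Real.sq_sqrt hβ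

lemma real_sign_mul_abs (x : ℝ) : Real.sign x * |x| = x := by
  rcases lt_trichotomy x 0 with h | h | h
  · rw [Real.sign_of_neg h, abs_of_neg h]; ring
  · simp [h]
  · rw [Real.sign_of_pos h, abs_of_pos h]; ring

lemma metricProj_unique {H : Type*} [NormedAddCommGroup H] [InnerProductSpace ℝ H]
    {S : Set H} (hS : Convex ℝ S) {x p q : H}
    (hp : IsMetricProjOn S x p) (hq : IsMetricProjOn S x q) : p = q := by
  have hd : ‖p - x‖ = ‖q - x‖ := le_antisymm (hp.2 q hq.1) (hq.2 p hp.1)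
  set mid : H := (1 / 2 : ℝ) • p + (1 / 2 : ℝ) • q with hmiddef
  have hmidmem : mid ∈ S :=
    hS hp.1 hq.1 (by norm_num) (by norm_num) (by norm_num)
  have hmid : ‖p - x‖ ≤ ‖mid - x‖ := hp.2 mid hmidmem
  have hpar := parallelogram_law_with_norm ℝ (p - x) (q - x)
  have h1 : (p - x) + (q - x) = (2 : ℝ) • (mid - x) := by
    rw [hmiddef]; module
  have h2 : (p - x) - (q - x) = p - q := by abel
  rw [h1, h2, norm_smul] at hpar
  simp only [Real.norm_ofNat] at hpar
  have h3 : ‖p - q‖ * ‖p - q‖ ≤ 0 := by nlinarith [norm_nonneg (mid - x), norm_nonneg (p - x)]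
  have h4 : ‖p - q‖ * ‖p - q‖ = 0 := le_antisymm h3 (mul_self_nonneg _)
  exact sub_eq_zero.mp (norm_eq_zero.mp (mul_self_eq_zero.mp h4))

open scoped RealInnerProductSpace in
/-- Successive projections of `0` onto the coefficient slabs
`C_k = {g : (⟨g, f_k⟩ - a_k)² ≤ β_k}` of an orthonormal family yield the
soft-thresholded vector `∑ sign(a_k)(|a_k| - √β_k)₊ f_k`. -/
theorem successive_proj_soft_thresholding
    {H : Type*} [NormedAddCommGroup H] [InnerProductSpace ℝ H] [CompleteSpace H]
    (m : ℕ) (f : Fin m → H) (hf : Orthonormal ℝ f)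
    (a β : Fin m → ℝ) (hβ : ∀ k, 0 ≤ β k)
    (C : Fin m → Set H) (hC : ∀ k, C k = {g : H | (⟪g, f k⟫ - a k) ^ 2 ≤ β k})
    (h : ℕ → H) (h0 : h 0 = 0)
    (hproj : ∀ k : Fin m, IsMetricProjOn (C k) (h k) (h (k + 1))) :
    h m = ∑ k : Fin m,
      (Real.sign (a k) * max (|a k| - Real.sqrt (β k)) 0) • f k := by
  classical
  set c : Fin m → ℝ := fun k => Real.sign (a k) * max (|a k| - Real.sqrt (β k)) 0 with hc
  -- basic facts about c
  have hCmem : ∀ k (g : H), g ∈ C k ↔ |⟪g, f k⟫ - a k| ≤ Real.sqrt (β k) := by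
    intro k g
    rw [hC k]
    exact sq_le_iff_abs_le_sqrt (hβ k)
  have hc_mem : ∀ k, |c k - a k| ≤ Real.sqrt (β k) := by
    intro k
    rcases le_or_gt (|a k|) (Real.sqrt (β k)) with hle | hlt
    · have : c k = 0 := by simp [hc, max_eq_right (sub_nonpos.mpr hle)]
      rw [this]; simpa using hle
    · have hane : a k ≠ 0 := by
        intro h0'; rw [h0'] at hlt; simp at hlt
        exact absurd hlt (not_lt.mpr (Real.sqrt_nonneg _))
      have hck : c k = Real.sign (a k) * (|a k| - Real.sqrt (β k)) := by
        simp [hc, max_eq_left (sub_nonneg.mpr hlt.le)]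
      have hsa : Real.sign (a k) * |a k| = a k := real_sign_mul_abs (a k)
      have : c k - a k = -(Real.sign (a k) * Real.sqrt (β k)) := by
        linear_combination hck + hsa
      rw [this, abs_neg, abs_mul]
      rcases Real.sign_apply_eq_of_ne_zero (a k) hane with hs | hs <;>
        simp [hs, abs_of_nonneg (Real.sqrt_nonneg (β k))]
  have hc_min : ∀ k (t : ℝ), |t - a k| ≤ Real.sqrt (β k) → |c k| ≤ |t| := by
    intro k t ht
    rcases le_or_gt (|a k|) (Real.sqrt (β k)) with hle | hlt
    · have : c k = 0 := by simp [hc, max_eq_right (sub_nonpos.mpr hle)]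
      rw [this]; simpa using abs_nonneg t
    · have hck : c k = Real.sign (a k) * (|a k| - Real.sqrt (β k)) := by
        simp [hc, max_eq_left (sub_nonneg.mpr hlt.le)]
      have hane : a k ≠ 0 := by
        intro h0'; rw [h0'] at hlt; simp at hlt
        exact absurd hlt (not_lt.mpr (Real.sqrt_nonneg _))
      have habs : |c k| = |a k| - Real.sqrt (β k) := by
        rw [hck, abs_mul]
        rcases Real.sign_apply_eq_of_ne_zero (a k) hane with hs | hs <;>
          simp [hs, abs_of_nonneg (sub_nonneg.mpr hlt.le)]
      rw [habs]
      have := abs_sub_abs_le_abs_sub t (a k)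
      have h2 := abs_sub_comm t (a k)
      linarith [abs_sub_abs_le_abs_sub (a k) t]
  have hCconv : ∀ k, Convex ℝ (C k) := by
    intro k
    have : C k = {g : H | |⟪g, f k⟫ - a k| ≤ Real.sqrt (β k)} := by
      ext g; exact hCmem k g
    rw [this]
    intro g1 hg1 g2 hg2 s t hs ht hst
    simp only [Set.mem_setOf_eq] at *
    rw [inner_add_left, real_inner_smul_left, real_inner_smul_left]
    have : s * ⟪g1, f k⟫ + t * ⟪g2, f k⟫ - a k
        = s * (⟪g1, f k⟫ - a k) + t * (⟪g2, f k⟫ - a k) := by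
      linear_combination (a k) * hst
    rw [this]
    calc |s * (⟪g1, f k⟫ - a k) + t * (⟪g2, f k⟫ - a k)|
        ≤ |s * (⟪g1, f k⟫ - a k)| + |t * (⟪g2, f k⟫ - a k)| := abs_add_le _ _
      _ = s * |⟪g1, f k⟫ - a k| + t * |⟪g2, f k⟫ - a k| := by
          rw [abs_mul, abs_mul, abs_of_nonneg hs, abs_of_nonneg ht]
      _ ≤ s * Real.sqrt (β k) + t * Real.sqrt (β k) := by
          gcongr
      _ = Real.sqrt (β k) := by rw [← add_mul, hst, one_mul]
  -- the main induction
  have key : ∀ n : ℕ, n ≤ m →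
      h n = ∑ j : Fin m, (if (j : ℕ) < n then c j else 0) • f j := by
    intro n
    induction n with
    | zero => intro _; simp [h0]
    | succ n ih =>
      intro hn1
      have hn : n < m := hn1
      have hx := ih hn.le
      set k : Fin m := ⟨n, hn⟩ with hkdef
      set x : H := ∑ j : Fin m, (if (j : ℕ) < n then c j else 0) • f j with hxdef
      -- inner product of x with f k is 0
      have hxk : ⟪x, f k⟫ = 0 := by
        rw [hxdef, hf.inner_left_fintype]
        simp [hkdef]
      have hfk1 : ⟪f k, f k⟫ = (1 : ℝ) := by
        have := orthonormal_iff_ite.mp hf k k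
        simpa using this
      -- the candidate projection
      set p : H := x + c k • f k with hpdef
      have hpk : ⟪p, f k⟫ = c k := by
        rw [hpdef, inner_add_left, hxk, real_inner_smul_left, hfk1]
        ring
      have hpmem : p ∈ C k := by
        rw [hCmem, hpk]
        exact hc_mem k
      have hpproj : IsMetricProjOn (C k) x p := by
        refine ⟨hpmem, fun y hy => ?_⟩
        have hnorm : ‖p - x‖ = |c k| := by
          have hpx : p - x = c k • f k := by rw [hpdef]; abel
          rw [hpx, norm_smul, hf.1 k, mul_one, Real.norm_eq_abs]
        rw [hnorm]
        have hyk := (hCmem k y).mp hy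
        have h1 : |c k| ≤ |⟪y, f k⟫| := hc_min k _ (by
          have : |⟪y, f k⟫ - a k| ≤ Real.sqrt (β k) := hyk
          exact this)
        have h2 : |⟪y - x, f k⟫| ≤ ‖y - x‖ * ‖f k‖ := abs_real_inner_le_norm _ _
        rw [hf.1 k, mul_one] at h2
        have h3 : ⟪y - x, f k⟫ = ⟪y, f k⟫ := by
          rw [inner_sub_left, hxk, sub_zero]
        rw [h3] at h2
        linarith
      -- uniqueness
      have hstep : h (n + 1) = p := by
        have hpr := hproj k
        have hk1 : ((k : ℕ) + 1) = n + 1 := rfl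
        have hkn : (k : ℕ) = n := rfl
        rw [hk1, hkn, hx] at hpr
        exact metricProj_unique (hCconv k) hpr hpproj
      rw [hstep, hpdef]
      -- sum manipulation
      have hsum : ∀ j : Fin m,
          (if (j : ℕ) < n + 1 then c j else 0) • f j
          = (if (j : ℕ) < n then c j else 0) • f j
            + (if j = k then c k • f k else 0) := by
        intro j
        by_cases hjk : j = k
        · subst hjk
          simp [hkdef, Nat.lt_succ_iff]
        · have hjn : (j : ℕ) ≠ n := fun hcontra => hjk (Fin.ext hcontra)
          have hiff : (j : ℕ) < n + 1 ↔ (j : ℕ) < n := by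
            rw [Nat.lt_succ_iff_lt_or_eq]
            exact or_iff_left hjn
          simp [hjk, hiff]
      calc x + c k • f k
          = (∑ j : Fin m, ((if (j : ℕ) < n then c j else 0) • f j
              + (if j = k then c k • f k else 0))) := by
            rw [Finset.sum_add_distrib]
            simp [hxdef, Finset.sum_ite_eq']
        _ = ∑ j : Fin m, (if (j : ℕ) < n + 1 then c j else 0) • f j := by
            exact (Finset.sum_congr rfl (fun j _ => (hsum j))).symm
  have := key m le_rfl
  rw [this]
  apply Finset.sum_congr rfl
  intro j _
  simp [j.isLt, hc]
end

section
/- Let (f_k)_{k=1}^m be orthogonal elements of a Hilbert space with ‖f_k‖² = D_k > 0, let a_k ∈ ℝ and β_k ≥ 0, and let C_k = {g : ‖Π_{M_k}g − a_k f_k‖² ≤ β_k} where M_k = span(f_k). Then the sets C_k are mutually 'orthogonal' in the sense that Π_{C_σ(m)}···Π_{C_σ(1)} 0 is the same for every permutation σ of {1,...,m}, and equals Π_{C_1 ∩ ... ∩ C_m} 0. -/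
open scoped RealInnerProductSpace
open Set

section MetricProj

variable {H : Type*} [NormedAddCommGroup H] [InnerProductSpace ℝ H] {S : Set H} {x p q : H}

theorem isMetricProjOn_iff_inner_le_zero (hS : Convex ℝ S) :
    IsMetricProjOn S x p ↔ p ∈ S ∧ ∀ y ∈ S, ⟪x - p, y - p⟫ ≤ 0 := by
  refine and_congr_right fun hp => ?_
  rw [← norm_eq_iInf_iff_real_inner_le_zero hS hp]
  have : Nonempty S := ⟨⟨p, hp⟩⟩
  simp only [norm_sub_rev x]
  have hbdd : BddBelow (range fun y : S => ‖(y : H) - x‖) := ⟨0, by rintro _ ⟨y, rfl⟩; positivity⟩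
  exact ⟨fun h => le_antisymm (le_ciInf fun y => h y y.2) (ciInf_le hbdd ⟨p, hp⟩),
    fun h y hy => h ▸ ciInf_le hbdd ⟨y, hy⟩⟩

theorem IsMetricProjOn.unique (hS : Convex ℝ S) (hp : IsMetricProjOn S x p)
    (hq : IsMetricProjOn S x q) : p = q := by
  rw [isMetricProjOn_iff_inner_le_zero hS] at hp hq
  have hsum : ⟪x - p, q - p⟫ + ⟪x - q, p - q⟫ = ‖q - p‖ ^ 2 := by
    rw [← neg_sub q p, inner_neg_right, ← sub_eq_add_neg, ← inner_sub_left,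
      sub_sub_sub_cancel_left, real_inner_self_eq_norm_sq]
  have hle : ‖q - p‖ ^ 2 ≤ 0 := hsum ▸ add_nonpos (hp.2 q hq.1) (hq.2 p hp.1)
  have hqp : ‖q - p‖ = 0 := pow_eq_zero_iff two_ne_zero |>.mp (le_antisymm hle (sq_nonneg _))
  exact (sub_eq_zero.mp (norm_eq_zero.mp hqp)).symm

end MetricProj

theorem Set.sub_projIcc_mul_sub_projIcc_nonpos {lo hi : ℝ} (h : lo ≤ hi) (c : ℝ) {z : ℝ}
    (hz : z ∈ Icc lo hi) : (c - projIcc lo hi h c) * (z - projIcc lo hi h c) ≤ 0 := by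
  rcases le_total c lo with hc | hc
  · rw [projIcc_of_le_left h hc]
    exact mul_nonpos_of_nonpos_of_nonneg (by simpa using hc) (by simpa using hz.1)
  rcases le_total hi c with hc' | hc'
  · rw [projIcc_of_right_le h hc']
    exact mul_nonpos_of_nonneg_of_nonpos (by simpa using hc') (by simpa using hz.2)
  · simp [projIcc_of_mem h ⟨hc, hc'⟩]

theorem orthonormal_inv_norm_smul {ι H : Type*} [NormedAddCommGroup H] [InnerProductSpace ℝ H]
    {v : ι → H} (hv0 : ∀ i, v i ≠ 0) (hv : Pairwise fun i j => ⟪v i, v j⟫ = 0) :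
    Orthonormal ℝ fun i => ‖v i‖⁻¹ • v i :=
  ⟨fun i => norm_smul_inv_norm (hv0 i), fun i j hij => by
    simp only [real_inner_smul_left, real_inner_smul_right, hv hij, mul_zero]⟩

section Slab

variable {H : Type*} [NormedAddCommGroup H] [InnerProductSpace ℝ H]

def slab (e : H) (lo hi : ℝ) : Set H := {g | ⟪g, e⟫ ∈ Icc lo hi}

theorem convex_slab (e : H) (lo hi : ℝ) : Convex ℝ (slab e lo hi) := by
  have : slab e lo hi = innerₛₗ ℝ e ⁻¹' Icc lo hi := by ext; simp [slab, real_inner_comm]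
  exact this ▸ (convex_Icc lo hi).linear_preimage _

variable {ι : Type*} {e : ι → H} {lo hi : ι → ℝ}

theorem isMetricProjOn_biInter_slab (he : Orthonormal ℝ e) (hlohi : ∀ i, lo i ≤ hi i)
    (s : Finset ι) (x : H) :
    IsMetricProjOn (⋂ i ∈ s, slab (e i) (lo i) (hi i)) x
      (x + ∑ i ∈ s, (projIcc (lo i) (hi i) (hlohi i) ⟪x, e i⟫ - ⟪x, e i⟫) • e i) := by
  set t : ι → ℝ := fun i => projIcc (lo i) (hi i) (hlohi i) ⟪x, e i⟫
  set p := x + ∑ i ∈ s, (t i - ⟪x, e i⟫) • e i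
  have hp : ∀ i ∈ s, ⟪p, e i⟫ = t i := fun i hs => by
    rw [inner_add_left, he.inner_left_sum _ hs]; simp
  rw [isMetricProjOn_iff_inner_le_zero (convex_iInter₂ fun i _ => convex_slab _ _ _)]
  simp only [mem_iInter₂]
  refine ⟨fun i hs => ?_, fun y hy => ?_⟩
  · change ⟪p, e i⟫ ∈ Icc (lo i) (hi i)
    exact hp i hs ▸ Subtype.prop _
  have hxp : x - p = ∑ i ∈ s, (⟪x, e i⟫ - t i) • e i := by
    simp [p, ← Finset.sum_neg_distrib, ← neg_smul]
  have : ⟪x - p, y - p⟫ = ∑ i ∈ s, (⟪x, e i⟫ - t i) * (⟪y, e i⟫ - t i) := by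
    rw [hxp, sum_inner]
    refine Finset.sum_congr rfl fun i hs => ?_
    rw [real_inner_smul_left, inner_sub_right, real_inner_comm y, real_inner_comm p,
      hp i hs]
  rw [this]
  exact Finset.sum_nonpos fun i hs => sub_projIcc_mul_sub_projIcc_nonpos _ _ (hy i hs)

theorem isMetricProjOn_slab (he : Orthonormal ℝ e) (hlohi : ∀ i, lo i ≤ hi i) (i : ι) (x : H) :
    IsMetricProjOn (slab (e i) (lo i) (hi i)) x
      (x + (projIcc (lo i) (hi i) (hlohi i) ⟪x, e i⟫ - ⟪x, e i⟫) • e i) := by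
  simpa using isMetricProjOn_biInter_slab he hlohi {i} x

theorem iterate_isMetricProjOn_slab_eq_sum (he : Orthonormal ℝ e) (hlohi : ∀ i, lo i ≤ hi i) :
    ∀ {m : ℕ} (g : Fin m → ι), Function.Injective g → ∀ w : ℕ → H, w 0 = 0 →
      (∀ k : Fin m, IsMetricProjOn (slab (e (g k)) (lo (g k)) (hi (g k))) (w k) (w (k + 1))) →
      w m = ∑ k, (projIcc (lo (g k)) (hi (g k)) (hlohi (g k)) 0 : ℝ) • e (g k)
  | 0, _, _, _, h0, _ => by simpa using h0
  | m + 1, g, hg, w, h0, hw => by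
    have ih := iterate_isMetricProjOn_slab_eq_sum he hlohi (g ∘ Fin.castSucc)
      (hg.comp (Fin.castSucc_injective m)) w h0 fun k => hw k.castSucc
    have hperp : ⟪w m, e (g (Fin.last m))⟫ = 0 := by
      rw [ih, sum_inner]
      refine Finset.sum_eq_zero fun k _ => ?_
      rw [real_inner_smul_left, Function.comp_apply, he.2 (hg.ne (Fin.castSucc_lt_last k).ne),
        mul_zero]
    have hstep := (hw (Fin.last m)).unique (convex_slab _ _ _) (isMetricProjOn_slab he hlohi _ _)
    rw [Fin.val_last, hperp] at hstep
    rw [hstep, Fin.sum_univ_castSucc, ih, sub_zero]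
    rfl

theorem setOf_norm_sq_le_eq_slab {f : H} (hf : f ≠ 0) (a : ℝ) {β : ℝ} (hβ : 0 ≤ β) :
    {g : H | ‖(⟪g, f⟫ / ‖f‖ ^ 2) • f - a • f‖ ^ 2 ≤ β} =
      slab (‖f‖⁻¹ • f) (a * ‖f‖ - √β) (a * ‖f‖ + √β) := by
  ext g
  have hn : ‖f‖ ≠ 0 := norm_ne_zero_iff.mpr hf
  have : ‖(⟪g, f⟫ / ‖f‖ ^ 2) • f - a • f‖ ^ 2 = (⟪g, ‖f‖⁻¹ • f⟫ - a * ‖f‖) ^ 2 := by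
    rw [← sub_smul, norm_smul, mul_pow, Real.norm_eq_abs, sq_abs, real_inner_smul_right]
    field_simp
  change _ ≤ β ↔ ⟪g, ‖f‖⁻¹ • f⟫ ∈ Icc _ _
  rw [this, Real.sq_le hβ, Set.mem_Icc]
  constructor <;> rintro ⟨h₁, h₂⟩ <;> constructor <;> linarith

end Slab

open scoped RealInnerProductSpace in
theorem orthogonal_slabs_proj_commute_general
    {H : Type*} [NormedAddCommGroup H] [InnerProductSpace ℝ H]
    (m : ℕ) (f : Fin m → H) (D : Fin m → ℝ) (hD : ∀ k, 0 < D k)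
    (hnorm : ∀ k, ‖f k‖ ^ 2 = D k)
    (horth : ∀ j k, j ≠ k → ⟪f j, f k⟫ = 0)
    (a β : Fin m → ℝ) (hβ : ∀ k, 0 ≤ β k)
    (C : Fin m → Set H)
    (hC : ∀ k, C k = {g : H | ‖(⟪g, f k⟫ / D k) • f k - (a k) • f k‖ ^ 2 ≤ β k})
    (σ : Equiv.Perm (Fin m))
    (u v : ℕ → H) (hu0 : u 0 = 0) (hv0 : v 0 = 0)
    (hu : ∀ k : Fin m, IsMetricProjOn (C k) (u k) (u (k + 1)))
    (hv : ∀ k : Fin m, IsMetricProjOn (C (σ k)) (v k) (v (k + 1))) :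
    u m = v m ∧ IsMetricProjOn (⋂ k, C k) 0 (u m) := by
  have hf : ∀ k, f k ≠ 0 := fun k => norm_ne_zero_iff.mp fun h => by
    simpa [h, ← hnorm k] using hD k
  set lo : Fin m → ℝ := fun k => a k * ‖f k‖ - √(β k)
  set hi : Fin m → ℝ := fun k => a k * ‖f k‖ + √(β k)
  have hlohi : ∀ k, lo k ≤ hi k := fun k => by simp only [lo, hi]; linarith [Real.sqrt_nonneg (β k)]
  have he : Orthonormal ℝ fun k => ‖f k‖⁻¹ • f k := orthonormal_inv_norm_smul hf horth
  have hCslab : ∀ k, C k = slab (‖f k‖⁻¹ • f k) (lo k) (hi k) := fun k => by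
    rw [hC, ← hnorm k, setOf_norm_sq_le_eq_slab (hf k) _ (hβ k)]
  have hum := iterate_isMetricProjOn_slab_eq_sum he hlohi id Function.injective_id u hu0
    (by simpa only [id, hCslab] using hu)
  have hvm := iterate_isMetricProjOn_slab_eq_sum he hlohi σ σ.injective v hv0
    (by simpa only [hCslab] using hv)
  rw [Equiv.sum_comp σ fun k => (projIcc (lo k) (hi k) (hlohi k) 0 : ℝ) • (‖f k‖⁻¹ • f k)] at hvm
  refine ⟨hum.trans hvm.symm, ?_⟩
  simpa [hum, hCslab] using isMetricProjOn_biInter_slab he hlohi Finset.univ 0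

open scoped RealInnerProductSpace in
/-- For orthogonal `f_k` and the slabs `C_k = {g : ‖Π_{span f_k} g - a_k f_k‖² ≤ β_k}`,
successive projections of `0` do not depend on the order, and the result equals the
projection of `0` onto the intersection of the `C_k`. -/
theorem orthogonal_slabs_proj_commute
    {H : Type*} [NormedAddCommGroup H] [InnerProductSpace ℝ H] [CompleteSpace H]
    (m : ℕ) (f : Fin m → H) (D : Fin m → ℝ) (hD : ∀ k, 0 < D k)
    (hnorm : ∀ k, ‖f k‖ ^ 2 = D k)
    (horth : ∀ j k, j ≠ k → ⟪f j, f k⟫ = 0)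
    (a β : Fin m → ℝ) (hβ : ∀ k, 0 ≤ β k)
    (C : Fin m → Set H)
    (hC : ∀ k, C k = {g : H | ‖(⟪g, f k⟫ / D k) • f k - (a k) • f k‖ ^ 2 ≤ β k})
    (σ : Equiv.Perm (Fin m))
    (u v : ℕ → H) (hu0 : u 0 = 0) (hv0 : v 0 = 0)
    (hu : ∀ k : Fin m, IsMetricProjOn (C k) (u k) (u (k + 1)))
    (hv : ∀ k : Fin m, IsMetricProjOn (C (σ k)) (v k) (v (k + 1))) :
    u m = v m ∧ IsMetricProjOn (⋂ k, C k) 0 (u m) :=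
  orthogonal_slabs_proj_commute_general m f D hD hnorm horth a β hβ C hC σ u v hu0 hv0 hu hv
end

section
/- Let c > 0, D > 0, β ≥ 1, and for each N ≥ 2 and each integer 1 ≤ m' ≤ N define R_N(m') = (8 m' c (1 + log(2N·N²)))/N + D (m')^{−2β} + 2 N^{−2} (N+1) c. Then with m' = ⌈(N/log N)^{1/(2β+1)}⌉ there is a constant D' = D'(c, D, β) such that R_N(m') ≤ D' (log N / N)^{2β/(2β+1)} for all N ≥ 2. -/
/-!
Write `t = log N / N` and `γ = 2β / (2β + 1)`. The choice `m' ≈ t^{-1/(2β+1)}` balances the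
variance and the bias: `m' · t` and `m'^{-2β}` are both of order `t^γ`, and the logarithmic factor
`1 + log (2N · N²)` is at most `6 log N`. The exceptional-event term is `O(1/N) = O(t)`, which is
`O(t^γ)` because `t ≤ 1` and `γ ≤ 1`.
-/

open Real

section Balance

variable {t s : ℝ}

theorem inv_rpow_one_div_add_one_mul_self (ht : 0 < t) (hs : s + 1 ≠ 0) :
    t⁻¹ ^ (1 / (s + 1)) * t = t ^ (s / (s + 1)) := by
  have hγ : s / (s + 1) = 1 - 1 / (s + 1) := by field_simp; ring
  rw [hγ, rpow_sub ht, rpow_one, inv_rpow ht.le, inv_mul_eq_div]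

theorem inv_rpow_one_div_add_one_rpow_neg (ht : 0 ≤ t) (hs : s + 1 ≠ 0) :
    (t⁻¹ ^ (1 / (s + 1))) ^ (-s) = t ^ (s / (s + 1)) := by
  rw [← rpow_mul (inv_nonneg.2 ht), inv_rpow ht, ← rpow_neg ht]
  congr 1
  field_simp

end Balance

section RiskTerms

variable {n s : ℝ}

theorem one_le_div_log (hn : 1 < n) : 1 ≤ n / log n :=
  (one_le_div (log_pos hn)).2 ((log_le_sub_one_of_pos (by linarith)).trans (by linarith))

theorem one_add_log_two_mul_mul_sq_le (hn : 2 ≤ n) : 1 + log (2 * n * n ^ 2) ≤ 6 * log n := by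
  have hlog2 : 1 / 2 < log 2 := by linarith [log_two_gt_d9]
  have hlogn : log 2 ≤ log n := log_le_log two_pos hn
  rw [log_mul (by positivity) (by positivity), log_mul two_ne_zero (by positivity), log_pow]
  push_cast
  linarith [log_two_lt_d9]

theorem variance_term_le {c : ℝ} {m : ℕ} (hc : 0 ≤ c) (hs : 0 ≤ s) (hn : 2 ≤ n)
    (hm : (m : ℝ) ≤ 2 * (n / log n) ^ (1 / (s + 1))) :
    8 * (m : ℝ) * c * (1 + log (2 * n * n ^ 2)) / n ≤ 96 * c * (log n / n) ^ (s / (s + 1)) := by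
  have hlog : 0 < log n := log_pos (by linarith)
  have hlog_factor : 0 ≤ 1 + log (2 * n * n ^ 2) :=
    add_nonneg zero_le_one (log_nonneg (by nlinarith))
  calc 8 * (m : ℝ) * c * (1 + log (2 * n * n ^ 2)) / n
      ≤ 8 * (2 * (n / log n) ^ (1 / (s + 1))) * c * (6 * log n) / n := by
        gcongr
        exact one_add_log_two_mul_mul_sq_le hn
    _ = 96 * c * ((log n / n)⁻¹ ^ (1 / (s + 1)) * (log n / n)) := by rw [inv_div]; ring
    _ = 96 * c * (log n / n) ^ (s / (s + 1)) := by
        rw [inv_rpow_one_div_add_one_mul_self (by positivity) (by positivity)]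

theorem bias_term_le {D m : ℝ} (hD : 0 ≤ D) (hs : 0 ≤ s) (hn : 1 < n)
    (hm : (n / log n) ^ (1 / (s + 1)) ≤ m) :
    D * m ^ (-s) ≤ D * (log n / n) ^ (s / (s + 1)) := by
  have hx : 0 < (n / log n) ^ (1 / (s + 1)) :=
    rpow_pos_of_pos (div_pos (by linarith) (log_pos hn)) _
  rw [← inv_rpow_one_div_add_one_rpow_neg (div_nonneg (log_nonneg hn.le) (by linarith))
    (by positivity), inv_div]
  exact mul_le_mul_of_nonneg_left (rpow_le_rpow_of_nonpos hx hm (neg_nonpos.2 hs)) hD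

theorem exceptional_term_le {c : ℝ} (hc : 0 ≤ c) (hs : 0 ≤ s) (hn : 2 ≤ n) :
    2 * n ^ (-(2 : ℝ)) * (n + 1) * c ≤ 8 * c * (log n / n) ^ (s / (s + 1)) := by
  have hlog : 1 / 2 ≤ log n := by linarith [log_two_gt_d9, log_le_log two_pos hn]
  have ht : log n / n ≤ (log n / n) ^ (s / (s + 1)) :=
    self_le_rpow_of_le_one (div_nonneg (by linarith) (by linarith))
      (div_le_one_of_le₀ (log_le_self (by linarith)) (by linarith))
      (div_le_one_of_le₀ (by linarith) (by linarith))
  have hsq : n ^ (-(2 : ℝ)) = (n ^ 2)⁻¹ := by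
    rw [rpow_neg (by linarith), ← rpow_natCast]
    norm_num
  calc 2 * n ^ (-(2 : ℝ)) * (n + 1) * c
      ≤ 2 * (n ^ 2)⁻¹ * (2 * n) * c := by rw [hsq]; gcongr; linarith
    _ = 8 * c * ((1 / 2) / n) := by field_simp; ring
    _ ≤ 8 * c * (log n / n) := by gcongr
    _ ≤ 8 * c * (log n / n) ^ (s / (s + 1)) := by gcongr

end RiskTerms

/-- Bias–variance optimization for the adaptive Sobolev rate: with
`R_N(m') = 8m'c(1+log(2N·N²))/N + D(m')^{-2β} + 2N^{-2}(N+1)c` and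
`m' = ⌈(N/log N)^{1/(2β+1)}⌉`, we have `R_N(m') ≤ D'(log N/N)^{2β/(2β+1)}`. -/
theorem bias_variance_tradeoff_rate
    (c D β : ℝ) (hc : 0 < c) (hD : 0 < D) (hβ : 1 ≤ β) :
    ∃ D' : ℝ, 0 < D' ∧ ∀ N : ℕ, 2 ≤ N →
      (let m' : ℕ := ⌈((N : ℝ) / Real.log N) ^ (1 / (2 * β + 1))⌉₊
       8 * (m' : ℝ) * c * (1 + Real.log (2 * N * (N : ℝ) ^ 2)) / N
         + D * (m' : ℝ) ^ (-(2 * β))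
         + 2 * (N : ℝ) ^ (-(2 : ℝ)) * ((N : ℝ) + 1) * c)
        ≤ D' * (Real.log N / N) ^ ((2 * β) / (2 * β + 1)) := by
  refine ⟨104 * c + D, by positivity, fun N hN => ?_⟩
  have hn : (2 : ℝ) ≤ N := by exact_mod_cast hN
  have hs : 0 ≤ 2 * β := by linarith
  have hx : 1 ≤ ((N : ℝ) / log N) ^ (1 / (2 * β + 1)) :=
    one_le_rpow (one_le_div_log (by linarith)) (by positivity)
  have hvar := variance_term_le hc.le hs hn (Nat.ceil_le_two_mul (hx.trans' (by norm_num)))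
  have hbias := bias_term_le hD.le hs (by linarith : (1 : ℝ) < N) (Nat.le_ceil _)
  have hexc := exceptional_term_le hc.le hs hn
  dsimp only
  linarith
end
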